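/- arXiv:1105.3078 — 6 statements merged into one kernel-verified Lean document; each statement's English description precedes it below -/
import Mathlib

section
/- Let a, b : ℝ → ℝ² be kinetic points a(t) = a₀ + t•u, b(t) = b₀ + t•v that collide at time t₀ (i.e., a(t₀) = b(t₀)) with u ≠ v. Then the set S = {(p, t) ∈ ℝ³ : p is collinear with a(t) and b(t)} equals the union of the horizontal plane {(p, t) : t = t₀} and a non-horizontal affine plane. -/
/-- Signed area determinant of two vectors in the plane. -/
def sdet (x y : ℝ × ℝ) : ℝ := x.1 * y.2 - x.2 * y.1

/-- For two kinetic points that collide at time `t₀` and have distinct velocities, the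
set of point-time pairs `(p, t)` such that `p` is collinear with the two points at
time `t` is the union of the horizontal plane `{(p, t) : t = t₀}` and a
non-horizontal (2-dimensional) affine plane. -/
theorem colliding_points_collinearity_surface_is_two_planes
    (a₀ b₀ u v : ℝ × ℝ) (t₀ : ℝ)
    (hcollide : a₀ + t₀ • u = b₀ + t₀ • v) (huv : u ≠ v) :
    ∃ P : AffineSubspace ℝ ((ℝ × ℝ) × ℝ),
      Module.finrank ℝ P.direction = 2 ∧
      (∀ c : ℝ, ¬ ((P : Set ((ℝ × ℝ) × ℝ)) ⊆ {q : (ℝ × ℝ) × ℝ | q.2 = c})) ∧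
      {q : (ℝ × ℝ) × ℝ | sdet ((a₀ + q.2 • u) - q.1) ((b₀ + q.2 • v) - q.1) = 0} =
        {q : (ℝ × ℝ) × ℝ | q.2 = t₀} ∪ (P : Set ((ℝ × ℝ) × ℝ)) := by
  -- components of the collision equation
  have hb1 : b₀.1 = a₀.1 + t₀ * u.1 - t₀ * v.1 := by
    have := congrArg Prod.fst hcollide
    simp [Prod.fst_add] at this
    linarith
  have hb2 : b₀.2 = a₀.2 + t₀ * u.2 - t₀ * v.2 := by
    have := congrArg Prod.snd hcollide
    simp [Prod.snd_add] at this
    linarith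
  set w : ℝ × ℝ := v - u with hwdef
  have hw0 : w ≠ 0 := sub_ne_zero.mpr (Ne.symm huv)
  set d : ℝ := u.1 * v.2 - u.2 * v.1 with hddef
  -- the linear functional whose level set is the non-horizontal plane
  let φ : ((ℝ × ℝ) × ℝ) →ₗ[ℝ] ℝ :=
    { toFun := fun q => q.1.2 * w.1 - q.1.1 * w.2 + q.2 * d
      map_add' := by intro x y; simp; ring
      map_smul' := by intro c x; simp; ring }
  have hφ_apply : ∀ q : (ℝ × ℝ) × ℝ, φ q = q.1.2 * w.1 - q.1.1 * w.2 + q.2 * d :=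
    fun _ => rfl
  have hφ0 : φ ≠ 0 := by
    intro h
    apply hw0
    have h1 : φ ((0, 1), 0) = 0 := by rw [h]; rfl
    have h2 : φ ((1, 0), 0) = 0 := by rw [h]; rfl
    rw [hφ_apply] at h1 h2
    simp at h1 h2
    exact Prod.ext h1 h2
  set x₀ : (ℝ × ℝ) × ℝ := (a₀ + t₀ • u, t₀) with hx₀
  refine ⟨AffineSubspace.mk' x₀ (LinearMap.ker φ), ?_, ?_, ?_⟩
  · rw [AffineSubspace.direction_mk']
    have := Module.Dual.finrank_ker_add_one_of_ne_zero hφ0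
    have h3 : Module.finrank ℝ ((ℝ × ℝ) × ℝ) = 3 := by simp
    omega
  · -- not horizontal
    intro c hc
    have hmem₀ : x₀ ∈ AffineSubspace.mk' x₀ (LinearMap.ker φ) :=
      AffineSubspace.self_mem_mk' _ _
    set s : ℝ := w.1 ^ 2 + w.2 ^ 2 with hs
    have hs0 : s ≠ 0 := by
      intro h
      apply hw0
      have h1 : w.1 = 0 := by nlinarith [sq_nonneg w.1, sq_nonneg w.2]
      have h2 : w.2 = 0 := by nlinarith [sq_nonneg w.1, sq_nonneg w.2]
      exact Prod.ext h1 h2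
    set k : (ℝ × ℝ) × ℝ := ((d * w.2 / s, -(d * w.1) / s), 1) with hk
    have hkker : k ∈ LinearMap.ker φ := by
      rw [LinearMap.mem_ker, hφ_apply]
      simp only [hk]
      field_simp
      ring
    have hmem₁ : k +ᵥ x₀ ∈ AffineSubspace.mk' x₀ (LinearMap.ker φ) :=
      AffineSubspace.vadd_mem_of_mem_direction
        (by rwa [AffineSubspace.direction_mk']) hmem₀
    have e0 : x₀.2 = c := hc hmem₀
    have e1 : (k +ᵥ x₀).2 = c := hc hmem₁
    have : (k +ᵥ x₀).2 = 1 + t₀ := rfl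
    rw [this] at e1
    rw [hx₀] at e0
    simp at e0
    linarith
  · -- the set equality
    ext q
    obtain ⟨⟨p1, p2⟩, t⟩ := q
    have hmem : (((p1, p2), t) : (ℝ × ℝ) × ℝ) ∈ AffineSubspace.mk' x₀ (LinearMap.ker φ)
        ↔ φ ((p1, p2), t) = φ x₀ := by
      rw [AffineSubspace.mem_mk', LinearMap.mem_ker]
      constructor
      · intro h
        have : φ (((p1, p2), t) -ᵥ x₀) = φ ((p1, p2), t) - φ x₀ := by
          rw [show (((p1, p2), t) -ᵥ x₀) = ((p1, p2), t) - x₀ from rfl, map_sub]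
        rw [this] at h
        linarith
      · intro h
        have : φ (((p1, p2), t) -ᵥ x₀) = φ ((p1, p2), t) - φ x₀ := by
          rw [show (((p1, p2), t) -ᵥ x₀) = ((p1, p2), t) - x₀ from rfl, map_sub]
        rw [this, h]; ring
    simp only [Set.mem_setOf_eq, Set.mem_union, hmem, hφ_apply, sdet]
    have key : (a₀ + t • u - (p1, p2)).1 * (b₀ + t • v - (p1, p2)).2 -
        (a₀ + t • u - (p1, p2)).2 * (b₀ + t • v - (p1, p2)).1 =
        (t - t₀) * ((p2 * w.1 - p1 * w.2 + t * d) -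
          (x₀.1.2 * w.1 - x₀.1.1 * w.2 + x₀.2 * d)) := by
      simp only [hx₀, hwdef, hddef, Prod.fst_add, Prod.snd_add, Prod.fst_sub, Prod.snd_sub,
        Prod.smul_fst, Prod.smul_snd, smul_eq_mul, Prod.fst_sub, Prod.snd_sub]
      rw [hb1, hb2]
      ring
    rw [key]
    rw [mul_eq_zero, sub_eq_zero, sub_eq_zero]
    simp only [SetLike.mem_coe, hmem, hφ_apply]
end

section
/- Let a(t) = a₀ + t•u and b(t) = b₀ + t•v be two kinetic points in ℝ² whose trajectories in ℝ³ (the lines {(a(t), t)} and {(b(t), t)}) are skew (neither intersecting nor parallel). Then the function F(p₁, p₂, t) = det(a(t) - p, b(t) - p) is a polynomial of total degree exactly 2 in (p₁, p₂, t), and its zero set is a quadric surface (it is irreducible of degree 2, not a union of two planes). -/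
/-!
In the variables `(p₁, p₂, t)` the polynomial `F = det(a(t) - p, b(t) - p)` is affine in `p₁`,
with coefficient `a₂(t) - b₂(t)`. When `u₂ ≠ v₂` this coefficient is a nonconstant affine function
of `t` (otherwise `u₁ ≠ v₁`, and swapping the two coordinates reduces to this case), so the
monomial `p₁ t` gives total degree two. A polynomial `f p₁ + g` with `f, g` free of `p₁` is
irreducible as soon as `f` and `g` are relatively prime. Here `f` is irreducible, and it does not
divide `g`: at the time `t*` with `a₂(t*) = b₂(t*)` the points `a(t*) ≠ b(t*)` differ in their
first coordinate, and then `g(p₂, t*) = (a₁(t*) - b₁(t*)) (a₂(t*) - p₂)` is not identically zero.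
-/

open MvPolynomial

namespace MvPolynomial

variable {σ K : Type*} [Field K]

theorem irreducible_C_mul_X_add_C {c : K} (hc : c ≠ 0) (i : σ) (a : K) :
    Irreducible (C c * X i + C a) :=
  irreducible_mul_X_add _ _ i (by simpa using hc) (by simp) (by simp)
    (hc.isUnit.map C).isRelPrime_left

theorem totalDegree_C_mul_X_add_C {c : K} (hc : c ≠ 0) (i : σ) (a : K) :
    (C c * X i + C a).totalDegree = 1 := by
  rw [totalDegree_add_eq_left_of_totalDegree_lt] <;>
    simp [C_mul_X_eq_monomial, totalDegree_monomial _ hc]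

theorem vars_C_mul_X_add_C {c : K} (hc : c ≠ 0) (i : σ) (a : K) :
    (C c * X i + C a).vars = {i} := by
  classical
  rw [vars_add_of_disjoint] <;> simp [vars_C_mul _ hc]

theorem isRelPrime_C_mul_X_add_C {c : K} (hc : c ≠ 0) {i : σ} {a : K} {g : MvPolynomial σ K}
    {x : σ → K} (hx : c * x i + a = 0) (hg : eval x g ≠ 0) :
    IsRelPrime (C c * X i + C a) g := by
  refine (irreducible_C_mul_X_add_C hc i a).isRelPrime_iff_not_dvd.mpr ?_
  rintro ⟨q, rfl⟩
  simp [hx] at hg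

theorem totalDegree_add_one_le_totalDegree_mul_X_add {R : Type*} [CommSemiring R]
    {f g : MvPolynomial σ R} (hf : f ≠ 0) {i : σ} (hi : i ∉ g.vars) :
    f.totalDegree + 1 ≤ (f * X i + g).totalDegree := by
  obtain ⟨m, hm, hdeg⟩ := Finset.exists_mem_eq_sup f.support (support_nonempty.mpr hf)
    fun s => s.sum fun _ e => e
  have hg : coeff (m + Finsupp.single i 1) g = 0 := by
    by_contra h
    exact hi ((mem_vars_iff_mem_support i).mpr ⟨_, mem_support_iff.mpr h, by simp⟩)
  have hmem : m + Finsupp.single i 1 ∈ (f * X i + g).support := by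
    simpa [coeff_mul_X, hg] using hm
  simpa [totalDegree, hdeg, Finsupp.sum_add_index'] using le_totalDegree hmem

end MvPolynomial

/-- `c + w t - pᵢ`, with the variables `(p₁, p₂, t)` numbered `0, 1, 2`. -/
noncomputable def displacement (c w : ℝ) (i : Fin 3) : MvPolynomial (Fin 3) ℝ :=
  C c + C w * X 2 - X i

noncomputable def collinearityPoly (a₀ b₀ u v : ℝ × ℝ) : MvPolynomial (Fin 3) ℝ :=
  displacement a₀.1 u.1 0 * displacement b₀.2 v.2 1 -
    displacement a₀.2 u.2 1 * displacement b₀.1 v.1 0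

theorem totalDegree_displacement_le (c w : ℝ) (i : Fin 3) :
    (displacement c w i).totalDegree ≤ 1 :=
  (totalDegree_sub _ _).trans <| max_le
    ((totalDegree_add _ _).trans (max_le (by simp) ((totalDegree_mul _ _).trans (by simp))))
    (by simp)

section collinearityPoly

variable (a₀ b₀ u v : ℝ × ℝ)

theorem eval_collinearityPoly (x : Fin 3 → ℝ) :
    eval x (collinearityPoly a₀ b₀ u v) =
      sdet ((a₀ + x 2 • u) - (x 0, x 1)) ((b₀ + x 2 • v) - (x 0, x 1)) := by
  simp only [collinearityPoly, displacement, sdet, map_sub, map_mul, map_add, eval_C, eval_X,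
    Prod.fst_sub, Prod.fst_add, Prod.smul_fst, Prod.snd_sub, Prod.snd_add, Prod.smul_snd,
    smul_eq_mul]
  ring

theorem collinearityPoly_eq_renameEquiv_swap :
    collinearityPoly a₀ b₀ u v =
      renameEquiv ℝ (Equiv.swap 0 1) (collinearityPoly b₀.swap a₀.swap v.swap u.swap) := by
  simp only [collinearityPoly, displacement, Prod.fst_swap, Prod.snd_swap, renameEquiv_apply,
    map_sub, map_mul, map_add, rename_C, rename_X, ne_eq, Fin.reduceEq, not_false_eq_true,
    Equiv.swap_apply_of_ne_of_ne, Equiv.swap_apply_left, Equiv.swap_apply_right]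
  ring

theorem totalDegree_collinearityPoly_le : (collinearityPoly a₀ b₀ u v).totalDegree ≤ 2 := by
  refine (totalDegree_sub _ _).trans (max_le ?_ ?_) <;>
    exact (totalDegree_mul _ _).trans
      (add_le_add (totalDegree_displacement_le ..) (totalDegree_displacement_le ..))

theorem exists_collinearityPoly_eq_mul_X_add :
    ∃ B : MvPolynomial (Fin 3) ℝ, 0 ∉ B.vars ∧ collinearityPoly a₀ b₀ u v =
      (C (u.2 - v.2) * X 2 + C (a₀.2 - b₀.2)) * X 0 + B := by
  refine ⟨(C a₀.1 + C u.1 * X 2) * displacement b₀.2 v.2 1 -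
      displacement a₀.2 u.2 1 * (C b₀.1 + C v.1 * X 2), ?_, ?_⟩
  · suffices hB : _ ∈ supported ℝ ({0}ᶜ : Set (Fin 3)) from fun h0 => mem_supported.mp hB h0 rfl
    have hC (r : ℝ) : C r ∈ supported ℝ ({0}ᶜ : Set (Fin 3)) := Subalgebra.algebraMap_mem _ r
    have hX (i : Fin 3) (hi : i ≠ 0) : X i ∈ supported ℝ ({0}ᶜ : Set (Fin 3)) :=
      X_mem_supported.mpr hi
    simp only [displacement]
    repeat' first
      | exact hC _ | exact hX _ (by decide)
      | apply Subalgebra.sub_mem | apply Subalgebra.mul_mem | apply Subalgebra.add_mem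
  · simp only [collinearityPoly, displacement, map_sub]
    ring

variable {a₀ b₀ u v}

theorem totalDegree_collinearityPoly_of_snd_ne (h : u.2 ≠ v.2) :
    (collinearityPoly a₀ b₀ u v).totalDegree = 2 := by
  refine (totalDegree_collinearityPoly_le ..).antisymm ?_
  obtain ⟨B, hB, hF⟩ := exists_collinearityPoly_eq_mul_X_add a₀ b₀ u v
  have hc : u.2 - v.2 ≠ 0 := sub_ne_zero.mpr h
  have hdeg := totalDegree_add_one_le_totalDegree_mul_X_add
    (irreducible_C_mul_X_add_C hc 2 (a₀.2 - b₀.2)).ne_zero hB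
  rwa [totalDegree_C_mul_X_add_C hc, ← hF] at hdeg

theorem irreducible_collinearityPoly_of_snd_ne (h : u.2 ≠ v.2)
    (hnocollide : ∀ t : ℝ, a₀ + t • u ≠ b₀ + t • v) :
    Irreducible (collinearityPoly a₀ b₀ u v) := by
  obtain ⟨B, hB, hF⟩ := exists_collinearityPoly_eq_mul_X_add a₀ b₀ u v
  have hc : u.2 - v.2 ≠ 0 := sub_ne_zero.mpr h
  obtain ⟨t, ht⟩ : ∃ t : ℝ, a₀.2 + t * u.2 = b₀.2 + t * v.2 :=
    ⟨(b₀.2 - a₀.2) / (u.2 - v.2), by field_simp; ring⟩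
  have hfst : a₀.1 + t * u.1 ≠ b₀.1 + t * v.1 := fun h1 =>
    hnocollide t (Prod.ext (by simpa) (by simpa))
  set x : Fin 3 → ℝ := ![0, a₀.2 + t * u.2 - 1, t]
  have hBx : eval x B = a₀.1 + t * u.1 - (b₀.1 + t * v.1) := by
    have hFx := eval_collinearityPoly a₀ b₀ u v x
    simp only [hF, x, sdet, map_add, map_mul, eval_C, eval_X, Matrix.cons_val,
      Matrix.cons_val_zero, Matrix.cons_val_one, mul_zero, zero_add, Prod.fst_sub, Prod.fst_add,
      Prod.smul_fst, Prod.snd_sub, Prod.snd_add, Prod.smul_snd, smul_eq_mul, sub_zero] at hFx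
    rw [hFx]
    linear_combination -(a₀.1 + t * u.1) * ht
  rw [hF]
  refine irreducible_mul_X_add _ _ 0 (irreducible_C_mul_X_add_C hc _ _).ne_zero
    (by rw [vars_C_mul_X_add_C hc]; decide) hB (isRelPrime_C_mul_X_add_C hc (x := x) ?_ ?_)
  · show (u.2 - v.2) * t + (a₀.2 - b₀.2) = 0
    linear_combination ht
  · rw [hBx]
    exact sub_ne_zero.mpr hfst

end collinearityPoly

/-- For two kinetic points whose trajectories in `ℝ³` are skew (they never collide and
their velocities differ, so the trajectory lines neither intersect nor are parallel),
the function `F(p₁, p₂, t) = det(a(t) - p, b(t) - p)` is a polynomial of total degree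
exactly `2` in `(p₁, p₂, t)`, and it is irreducible (so its zero set is an irreducible
quadric surface, not a union of two planes). -/
theorem skew_collinearity_surface_is_irreducible_quadric
    (a₀ b₀ u v : ℝ × ℝ)
    (hnotpar : u ≠ v)
    (hnocollide : ∀ t : ℝ, a₀ + t • u ≠ b₀ + t • v) :
    ∃ F : MvPolynomial (Fin 3) ℝ,
      F.totalDegree = 2 ∧ Irreducible F ∧
      ∀ x : Fin 3 → ℝ,
        MvPolynomial.eval x F =
          sdet ((a₀ + x 2 • u) - (x 0, x 1)) ((b₀ + x 2 • v) - (x 0, x 1)) := by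
  suffices h : (collinearityPoly a₀ b₀ u v).totalDegree = 2 ∧
      Irreducible (collinearityPoly a₀ b₀ u v) from
    ⟨_, h.1, h.2, eval_collinearityPoly a₀ b₀ u v⟩
  rcases ne_or_eq u.2 v.2 with h | h
  · exact ⟨totalDegree_collinearityPoly_of_snd_ne h,
      irreducible_collinearityPoly_of_snd_ne h hnocollide⟩
  · have h' : v.swap.2 ≠ u.swap.2 := fun h1 => hnotpar (Prod.ext h1.symm h)
    have hnocollide' (t : ℝ) : b₀.swap + t • v.swap ≠ a₀.swap + t • u.swap := fun h1 =>
      hnocollide t (by simpa using congrArg Prod.swap h1.symm)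
    rw [collinearityPoly_eq_renameEquiv_swap, totalDegree_renameEquiv, MulEquiv.irreducible_iff]
    exact ⟨totalDegree_collinearityPoly_of_snd_ne h',
      irreducible_collinearityPoly_of_snd_ne h' hnocollide'⟩
end

section
/- Let n points move on the circle of radius 1 (in the construction: each point pᵢ has speed 1, direction angle 3π/2 + π/(4i), and at time 0 lies on the unit circle centered at (-1,1) so that its trajectory passes through the origin). Then for any three indices j < k < l, there exist two distinct times t', t'' ∈ ℝ at which p_j, p_k, p_l are collinear; consequently this point set determines exactly 2·(n choose 3) 3-collinearities. -/
/-!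
At time `t` the points `p j, p k, p l` are collinear iff a quadratic polynomial in `t` vanishes.
Its leading coefficient is the orientation of the three directions `d j, d k, d l`, which lie on
the lower half of the unit circle; its constant coefficient is the orientation of the three
starting points, which lie on the lower half of the unit circle about `(-1, 1)`. As the index
grows, the directions move from right to left along their semicircle, while the starting points
(the nearer intersections with that circle of the rays through the origin opposite to the
directions) move from left to right. Points of a lower semicircle are in counterclockwise
position when listed from left to right, so the two coefficients have opposite signs and the
quadratic has exactly two real roots. Each of the `n choose 3` triples therefore contributes
exactly two collinearities.
-/

open Real

lemma collinear_iff_sdet_eq_zero (a b c : ℝ × ℝ) :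
    Collinear ℝ ({a, b, c} : Set (ℝ × ℝ)) ↔ sdet (b - a) (c - a) = 0 := by
  rw [collinear_iff_of_mem (Set.mem_insert a _)]
  simp only [Set.mem_insert_iff, Set.mem_singleton_iff, forall_eq_or_imp, forall_eq,
    vadd_eq_add, ← sub_eq_iff_eq_add, sub_self]
  generalize b - a = u, c - a = w
  constructor
  · rintro ⟨v, -, ⟨r, rfl⟩, ⟨s, rfl⟩⟩
    simp only [sdet, Prod.smul_fst, Prod.smul_snd, smul_eq_mul]
    ring
  · intro h
    by_cases hu : u = 0
    · exact ⟨w, ⟨0, by simp⟩, ⟨0, by simp [hu]⟩, ⟨1, by simp⟩⟩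
    have hnorm : u.1 ^ 2 + u.2 ^ 2 ≠ 0 := by
      contrapose! hu
      ext <;> simp <;> nlinarith [sq_nonneg u.1, sq_nonneg u.2]
    -- `w` is its own orthogonal projection onto the line `ℝ • u`
    refine ⟨u, ⟨0, by simp⟩, ⟨1, by simp⟩, ⟨(u.1 * w.1 + u.2 * w.2) / (u.1 ^ 2 + u.2 ^ 2), ?_⟩⟩
    simp only [sdet] at h
    ext <;> simp only [Prod.smul_fst, Prod.smul_snd, smul_eq_mul] <;> field_simp
    · linear_combination -u.2 * h
    · linear_combination u.1 * h

lemma sdet_sub_sub_swap (a b c : ℝ × ℝ) : sdet (b - a) (c - a) = -sdet (b - c) (a - c) := by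
  simp only [sdet, Prod.fst_sub, Prod.snd_sub]
  ring

lemma sdet_sub_add_smul (x y z u v w : ℝ × ℝ) (t : ℝ) :
    sdet ((y + t • v) - (x + t • u)) ((z + t • w) - (x + t • u)) =
      sdet (v - u) (w - u) * (t * t) + (sdet (y - x) (w - u) + sdet (v - u) (z - x)) * t +
        sdet (y - x) (z - x) := by
  simp only [sdet, Prod.fst_sub, Prod.snd_sub, Prod.fst_add, Prod.snd_add, Prod.smul_fst,
    Prod.smul_snd, smul_eq_mul]
  ring

def lowerUnitSemicircle : Set (ℝ × ℝ) := {u | u.1 ^ 2 + u.2 ^ 2 = 1 ∧ u.2 < 0}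

lemma sdet_pos_of_mem_lowerUnitSemicircle {u v : ℝ × ℝ} (hu : u ∈ lowerUnitSemicircle)
    (hv : v ∈ lowerUnitSemicircle) (huv : u.1 < v.1) : 0 < sdet u v := by
  obtain ⟨hu, hu₂⟩ := hu
  obtain ⟨hv, hv₂⟩ := hv
  have hdot : 0 < 1 + (u.1 * v.1 + u.2 * v.2) := by
    nlinarith [sq_nonneg (u.1 + v.1), mul_pos (neg_pos.2 hu₂) (neg_pos.2 hv₂)]
  have key : sdet u v * -(u.2 + v.2) = (v.1 - u.1) * (1 + (u.1 * v.1 + u.2 * v.2)) := by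
    simp only [sdet]
    linear_combination (-u.1) * hv + v.1 * hu
  exact pos_of_mul_pos_left (key ▸ mul_pos (sub_pos.2 huv) hdot) (by linarith)

lemma sdet_sub_sub_pos_of_mem_lowerUnitSemicircle {u v w : ℝ × ℝ}
    (hu : u ∈ lowerUnitSemicircle) (hv : v ∈ lowerUnitSemicircle) (hw : w ∈ lowerUnitSemicircle)
    (huv : u.1 < v.1) (hvw : v.1 < w.1) : 0 < sdet (v - u) (w - u) := by
  have hsdet_uv := sdet_pos_of_mem_lowerUnitSemicircle hu hv huv
  have hsdet_vw := sdet_pos_of_mem_lowerUnitSemicircle hv hw hvw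
  obtain ⟨hu, -⟩ := hu
  obtain ⟨hv, -⟩ := hv
  obtain ⟨hw, -⟩ := hw
  have hdot_uv : 0 < 1 - (u.1 * v.1 + u.2 * v.2) := by
    nlinarith [sq_nonneg (u.2 - v.2), mul_pos (sub_pos.2 huv) (sub_pos.2 huv)]
  have hdot_vw : 0 < 1 - (v.1 * w.1 + v.2 * w.2) := by
    nlinarith [sq_nonneg (v.2 - w.2), mul_pos (sub_pos.2 hvw) (sub_pos.2 hvw)]
  -- expand `sdet u w` in the orthonormal frame formed by `v` and its quarter turn
  have key : sdet (v - u) (w - u) = sdet u v * (1 - (v.1 * w.1 + v.2 * w.2))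
      + sdet v w * (1 - (u.1 * v.1 + u.2 * v.2)) := by
    simp only [sdet, Prod.fst_sub, Prod.snd_sub]
    linear_combination (u.1 * w.2 - u.2 * w.1) * hv
  rw [key]
  exact add_pos (mul_pos hsdet_uv hdot_vw) (mul_pos hsdet_vw hdot_uv)

lemma exists_ne_roots_of_mul_neg {a b c : ℝ} (h : a * c < 0) :
    ∃ t' t'', t' ≠ t'' ∧ ∀ t, a * (t * t) + b * t + c = 0 ↔ t = t' ∨ t = t'' := by
  have ha : a ≠ 0 := by rintro rfl; simp at h
  have hdisc : 0 < discrim a b c := by unfold discrim; nlinarith [sq_nonneg b]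
  set s := √(discrim a b c)
  have hs : 0 < s := sqrt_pos.2 hdisc
  refine ⟨(-b + s) / (2 * a), (-b - s) / (2 * a), ?_,
    quadratic_eq_zero_iff ha (mul_self_sqrt hdisc.le).symm⟩
  rw [Ne, div_left_inj' (mul_ne_zero two_ne_zero ha)]
  linarith

theorem exists_two_collinear_times {ι : Type*} [Preorder ι] {s : Set ι} {q d : ι → ℝ × ℝ}
    {m : ℝ × ℝ} (hd : ∀ i ∈ s, d i ∈ lowerUnitSemicircle)
    (hd_anti : StrictAntiOn (fun i => (d i).1) s) (hq : ∀ i ∈ s, q i - m ∈ lowerUnitSemicircle)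
    (hq_mono : StrictMonoOn (fun i => (q i).1) s) {j k l : ι} (hj : j ∈ s) (hk : k ∈ s)
    (hl : l ∈ s) (hjk : j < k) (hkl : k < l) :
    ∃ t' t'' : ℝ, t' ≠ t'' ∧ ∀ t : ℝ,
      sdet ((q k + t • d k) - (q j + t • d j)) ((q l + t • d l) - (q j + t • d j)) = 0 ↔
        t = t' ∨ t = t'' := by
  have hlead : sdet (d k - d j) (d l - d j) < 0 := by
    rw [sdet_sub_sub_swap, neg_lt_zero]
    exact sdet_sub_sub_pos_of_mem_lowerUnitSemicircle (hd l hl) (hd k hk) (hd j hj)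
      (hd_anti hk hl hkl) (hd_anti hj hk hjk)
  have hconst : 0 < sdet (q k - q j) (q l - q j) := by
    rw [← sub_sub_sub_cancel_right (q k) (q j) m, ← sub_sub_sub_cancel_right (q l) (q j) m]
    exact sdet_sub_sub_pos_of_mem_lowerUnitSemicircle (hq j hj) (hq k hk) (hq l hl)
      (sub_lt_sub_right (hq_mono hj hk hjk) _) (sub_lt_sub_right (hq_mono hk hl hkl) _)
  simp only [sdet_sub_add_smul]
  exact exists_ne_roots_of_mul_neg (mul_neg_of_neg_of_pos hlead hconst)

lemma sin_neg_cos_mem_lowerUnitSemicircle {a : ℝ} (ha : 0 < cos a) :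
    (sin a, -cos a) ∈ lowerUnitSemicircle :=
  ⟨by simp only [neg_sq, sin_sq_add_cos_sq], neg_neg_of_pos ha⟩

lemma neg_smul_mem_circle_iff (a s : ℝ) :
    ((-s • (sin a, -cos a)).1 + 1) ^ 2 + ((-s • (sin a, -cos a)).2 - 1) ^ 2 = 1 ↔
      s * (2 * (sin a + cos a) - s) = 1 := by
  simp only [Prod.smul_mk, smul_eq_mul]
  constructor <;> intro h <;> linear_combination -h + s ^ 2 * sin_sq_add_cos_sq a

/-- The ray from the origin in direction `(-sin a, cos a)` meets the unit circle about `(-1, 1)`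
at the distances `s` with `s * (2 * (sin a + cos a) - s) = 1`; `c` is the smaller one. -/
def IsNearIntersection (a c : ℝ) : Prop :=
  c * (2 * (sin a + cos a) - c) = 1 ∧ c ≤ sin a + cos a

lemma isNearIntersection_of_forall_le {a c : ℝ} (hc : 0 < c)
    (hroot : c * (2 * (sin a + cos a) - c) = 1)
    (hmin : ∀ s, 0 < s → s * (2 * (sin a + cos a) - s) = 1 → c ≤ s) :
    IsNearIntersection a c := by
  refine ⟨hroot, ?_⟩
  -- the other root is `2 * (sin a + cos a) - c`
  have := hmin (2 * (sin a + cos a) - c) (pos_of_mul_pos_right (hroot ▸ one_pos) hc.le)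
    (by rw [← hroot]; ring)
  linarith

namespace IsNearIntersection

variable {a b c ca cb : ℝ}

lemma mul_cos_lt_one (ha : a ∈ Set.Ioo 0 (π / 2)) (h : IsNearIntersection a c) :
    c * cos a < 1 := by
  obtain ⟨hroot, hle⟩ := h
  have hsin : 0 < sin a := sin_pos_of_pos_of_lt_pi ha.1 (by linarith [ha.2, pi_pos])
  have hcos : 0 < cos a := cos_pos_of_mem_Ioo ⟨by linarith [ha.1, pi_pos], ha.2⟩
  have hc : 0 < c := pos_of_mul_pos_left (hroot ▸ one_pos) (by linarith)
  nlinarith [mul_pos hc hsin, mul_nonneg hc.le (sub_nonneg.2 hle)]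

lemma neg_smul_sub_mem_lowerUnitSemicircle (ha : a ∈ Set.Ioo 0 (π / 2))
    (h : IsNearIntersection a c) : -c • (sin a, -cos a) - (-1, 1) ∈ lowerUnitSemicircle := by
  refine ⟨?_, ?_⟩
  · simpa only [Prod.fst_sub, Prod.snd_sub, sub_neg_eq_add] using
      (neg_smul_mem_circle_iff a c).2 h.1
  · simpa [Prod.smul_mk] using h.mul_cos_lt_one ha

lemma mul_sin_lt_mul_sin (hb : 0 < b) (hba : b < a) (ha : a < π / 2)
    (hca : IsNearIntersection a ca) (hcb : IsNearIntersection b cb) : cb * sin b < ca * sin a := by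
  obtain ⟨hca, hca_le⟩ := hca
  obtain ⟨hcb, hcb_le⟩ := hcb
  have hsin_a : 0 < sin a := sin_pos_of_pos_of_lt_pi (hb.trans hba) (by linarith [pi_pos])
  have hsin_b : 0 < sin b := sin_pos_of_pos_of_lt_pi hb (by linarith [pi_pos])
  have hcos_a : 0 < cos a := cos_pos_of_mem_Ioo ⟨by linarith [pi_pos], ha⟩
  have hcos_b : 0 < cos b := cos_pos_of_mem_Ioo ⟨by linarith [pi_pos], by linarith⟩
  -- `r = sin + cos - c ≥ 0` satisfies `r ^ 2 = 2 sin cos` and `c = 1 / (sin + cos + r)`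
  set ra := sin a + cos a - ca
  set rb := sin b + cos b - cb
  have hra : ra ^ 2 = 2 * sin a * cos a := by linear_combination sin_sq_add_cos_sq a - hca
  have hrb : rb ^ 2 = 2 * sin b * cos b := by linear_combination sin_sq_add_cos_sq b - hcb
  have hcross : sin b * cos a < sin a * cos b := by
    have := sin_pos_of_pos_of_lt_pi (sub_pos.2 hba) (by linarith [pi_pos])
    rw [sin_sub] at this
    linarith
  have hr : sin b * ra ≤ sin a * rb := by
    refine (pow_le_pow_iff_left₀ (by positivity) (by positivity) two_ne_zero).1 ?_
    rw [mul_pow, mul_pow, hra, hrb]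
    nlinarith [mul_pos hsin_a hsin_b]
  have hDa : 0 < sin a + cos a + ra := by positivity
  have hDb : 0 < sin b + cos b + rb := by positivity
  calc cb * sin b = sin b / (sin b + cos b + rb) := by
        rw [eq_div_iff hDb.ne']; linear_combination sin b * hcb
    _ < sin a / (sin a + cos a + ra) := by
        rw [div_lt_div_iff₀ hDb hDa]; linarith
    _ = ca * sin a := by
        rw [div_eq_iff hDa.ne']; linear_combination -sin a * hca

end IsNearIntersection

theorem exists_two_collinear_times_of_isNearIntersection {ι : Type*} [Preorder ι] {s : Set ι}
    {α c : ι → ℝ} {d : ι → ℝ × ℝ} (hα : ∀ i ∈ s, α i ∈ Set.Ioo 0 (π / 2))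
    (hα_anti : StrictAntiOn α s) (hc : ∀ i ∈ s, IsNearIntersection (α i) (c i))
    (hd : ∀ i, d i = (sin (α i), -cos (α i))) {j k l : ι} (hj : j ∈ s) (hk : k ∈ s) (hl : l ∈ s)
    (hjk : j < k) (hkl : k < l) :
    ∃ t' t'' : ℝ, t' ≠ t'' ∧ ∀ t : ℝ,
      sdet ((-c k • d k + t • d k) - (-c j • d j + t • d j))
        ((-c l • d l + t • d l) - (-c j • d j + t • d j)) = 0 ↔ t = t' ∨ t = t'' := by
  have hα' : ∀ i ∈ s, α i ∈ Set.Ioo (-(π / 2)) (π / 2) := fun i hi =>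
    ⟨by linarith [(hα i hi).1, pi_pos], (hα i hi).2⟩
  refine exists_two_collinear_times (q := fun i => -c i • d i) (m := (-1, 1)) ?_ ?_ ?_ ?_
    hj hk hl hjk hkl
  · intro i hi
    rw [hd]
    exact sin_neg_cos_mem_lowerUnitSemicircle (cos_pos_of_mem_Ioo (hα' i hi))
  · intro i hi i' hi' h
    simp only [hd]
    exact strictMonoOn_sin (Set.Ioo_subset_Icc_self (hα' i' hi'))
      (Set.Ioo_subset_Icc_self (hα' i hi)) (hα_anti hi hi' h)
  · intro i hi
    rw [hd]
    exact (hc i hi).neg_smul_sub_mem_lowerUnitSemicircle (hα i hi)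
  · intro i hi i' hi' h
    simp only [hd, Prod.smul_mk, smul_eq_mul, neg_mul, neg_lt_neg_iff]
    exact (hc i hi).mul_sin_lt_mul_sin (hα i' hi').1 (hα_anti hi hi' h) (hα i hi).2 (hc i' hi')

lemma pi_div_four_mul_mem_Ioo {i : ℕ} (hi : 1 ≤ i) : π / (4 * (i : ℝ)) ∈ Set.Ioo 0 (π / 2) := by
  have : (1 : ℝ) ≤ i := by exact_mod_cast hi
  refine ⟨by positivity, ?_⟩
  rw [div_lt_div_iff₀ (by positivity) two_pos]
  nlinarith [pi_pos]

lemma strictAntiOn_pi_div_four_mul : StrictAntiOn (fun i : ℕ => π / (4 * (i : ℝ))) (Set.Ici 1) := by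
  intro i hi i' _ hii'
  have : (1 : ℝ) ≤ i := by exact_mod_cast hi
  have : (i : ℝ) < i' := by exact_mod_cast hii'
  exact div_lt_div_of_pos_left pi_pos (by positivity) (by linarith)

lemma Finset.exists_lt_lt_eq_of_card_eq_three {α : Type*} [LinearOrder α] {T : Finset α}
    (h : T.card = 3) : ∃ j k l, j < k ∧ k < l ∧ T = {j, k, l} := by
  set f := T.orderEmbOfFin h
  refine ⟨f 0, f 1, f 2, f.strictMono (by decide), f.strictMono (by decide), ?_⟩
  ext x
  rw [← Finset.mem_coe, ← Finset.range_orderEmbOfFin T h]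
  simp only [Set.mem_range, Fin.exists_fin_succ, Fin.exists_fin_zero, Finset.mem_insert,
    Finset.mem_singleton]
  simp [eq_comm, f]

lemma Set.ncard_setOf_fst_mem_and {α β : Type*} (S : Finset α) (F : α → Finset β)
    (P : α → β → Prop) (hP : ∀ a ∈ S, ∀ b, P a b ↔ b ∈ F a) :
    {x : α × β | x.1 ∈ S ∧ P x.1 x.2}.ncard = ∑ a ∈ S, (F a).card := by
  have : {x : α × β | x.1 ∈ S ∧ P x.1 x.2}
      = ((S.sigma F).map (Equiv.sigmaEquivProd α β).toEmbedding : Set (α × β)) := by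
    ext ⟨a, b⟩
    simp only [Finset.coe_map, Equiv.sigmaEquivProd, Set.mem_image,
      Finset.mem_coe, Finset.mem_sigma]
    constructor
    · rintro ⟨ha, hab⟩
      exact ⟨⟨a, b⟩, ⟨ha, (hP a ha b).1 hab⟩, rfl⟩
    · rintro ⟨⟨a', b'⟩, ⟨ha, hb⟩, h⟩
      obtain ⟨rfl, rfl⟩ := Prod.mk.inj h
      exact ⟨ha, (hP a' ha b').2 hb⟩
  rw [this, Set.ncard_coe_finset, Finset.card_map, Finset.card_sigma]

lemma ncard_collinearities_of_forall_exists_two_times (n : ℕ) (p : ℕ → ℝ → ℝ × ℝ)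
    (h : ∀ j k l : ℕ, 1 ≤ j → j < k → k < l → l ≤ n → ∃ t' t'' : ℝ, t' ≠ t'' ∧ ∀ t,
      sdet (p k t - p j t) (p l t - p j t) = 0 ↔ t = t' ∨ t = t'') :
    {x : Finset ℕ × ℝ | x.1 ⊆ Finset.Icc 1 n ∧ x.1.card = 3 ∧
        ¬ (∀ s : ℝ, Collinear ℝ ((fun i => p i s) '' ↑x.1)) ∧
        Collinear ℝ ((fun i => p i x.2) '' ↑x.1)}.ncard = 2 * n.choose 3 := by
  have htriple : ∀ T ∈ (Finset.Icc 1 n).powersetCard 3, ∃ F : Finset ℝ, F.card = 2 ∧ ∀ t,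
      (¬ (∀ s : ℝ, Collinear ℝ ((fun i => p i s) '' ↑T)) ∧
        Collinear ℝ ((fun i => p i t) '' ↑T)) ↔ t ∈ F := by
    intro T hT
    obtain ⟨hsub, hcard⟩ := Finset.mem_powersetCard.1 hT
    obtain ⟨j, k, l, hjk, hkl, rfl⟩ := Finset.exists_lt_lt_eq_of_card_eq_three hcard
    have hj := Finset.mem_Icc.1 (hsub (Finset.mem_insert_self j _))
    have hl := Finset.mem_Icc.1 (hsub (by simp : l ∈ ({j, k, l} : Finset ℕ)))
    obtain ⟨t', t'', hne, htimes⟩ := h j k l hj.1 hjk hkl hl.2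
    have hcol : ∀ t, Collinear ℝ ((fun i => p i t) '' ↑({j, k, l} : Finset ℕ)) ↔
        t = t' ∨ t = t'' := by
      intro t
      rw [Finset.coe_insert, Finset.coe_pair, Set.image_insert_eq, Set.image_pair,
        collinear_iff_sdet_eq_zero, htimes]
    have hnot : ¬ ∀ s, Collinear ℝ ((fun i => p i s) '' ↑({j, k, l} : Finset ℕ)) := by
      obtain ⟨s, hs⟩ := (Set.toFinite {t', t''}).exists_notMem
      exact fun hall => hs ((hcol s).1 (hall s))
    exact ⟨{t', t''}, Finset.card_pair hne, fun t => by
      rw [and_iff_right hnot, hcol, Finset.mem_insert, Finset.mem_singleton]⟩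
  choose! F hF using htriple
  calc _ = {x : Finset ℕ × ℝ | x.1 ∈ (Finset.Icc 1 n).powersetCard 3 ∧
          (¬ (∀ s : ℝ, Collinear ℝ ((fun i => p i s) '' ↑x.1)) ∧
            Collinear ℝ ((fun i => p i x.2) '' ↑x.1))}.ncard := by
        simp only [Finset.mem_powersetCard, and_assoc]
    _ = 2 * n.choose 3 := by
        rw [Set.ncard_setOf_fst_mem_and _ F _ fun T hT => (hF T hT).2,
          Finset.sum_congr rfl fun T hT => (hF T hT).1, Finset.sum_const, smul_eq_mul,
          Finset.card_powersetCard, Nat.card_Icc, Nat.add_sub_cancel, mul_comm]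

/-- The construction attaining the upper bound: `n` kinetic points `p₁, …, pₙ`, each
moving with unit speed in direction `θᵢ = 3π/2 + π/(4i)`, starting (at time 0) on the
unit circle centered at `(-1, 1)` at the intersection point closer to the origin of
that circle with the line through the origin in direction `θᵢ` (so each trajectory
passes through the origin).  Then every triple `j < k < l` is collinear at two
distinct times, and the total number of 3-collinearities — pairs `(T, t)` of a
3-element subset of indices not always collinear together with a time at which it is
collinear — is exactly `2 * (n choose 3)`. -/
theorem lower_bound_construction_two_n_choose_three_collinearities
    (n : ℕ) (θ : ℕ → ℝ) (hθ : ∀ i : ℕ, θ i = 3 * π / 2 + π / (4 * (i : ℝ)))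
    (d : ℕ → ℝ × ℝ) (hd : ∀ i : ℕ, d i = (cos (θ i), sin (θ i)))
    (c : ℕ → ℝ)
    (hc : ∀ i : ℕ, 1 ≤ i → i ≤ n →
      0 < c i ∧
      ((-(c i) • d i).1 + 1) ^ 2 + ((-(c i) • d i).2 - 1) ^ 2 = 1 ∧
      (∀ s : ℝ, 0 < s → ((-s • d i).1 + 1) ^ 2 + ((-s • d i).2 - 1) ^ 2 = 1 →
        c i ≤ s))
    (p : ℕ → ℝ → ℝ × ℝ)
    (hp : ∀ (i : ℕ) (t : ℝ), p i t = -(c i) • d i + t • d i) :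
    (∀ j k l : ℕ, 1 ≤ j → j < k → k < l → l ≤ n →
      ∃ t' t'' : ℝ, t' ≠ t'' ∧
        sdet (p k t' - p j t') (p l t' - p j t') = 0 ∧
        sdet (p k t'' - p j t'') (p l t'' - p j t'') = 0) ∧
    {x : Finset ℕ × ℝ | x.1 ⊆ Finset.Icc 1 n ∧ x.1.card = 3 ∧
        ¬ (∀ s : ℝ, Collinear ℝ ((fun i => p i s) '' ↑x.1)) ∧
        Collinear ℝ ((fun i => p i x.2) '' ↑x.1)}.ncard = 2 * n.choose 3 := by
  set α : ℕ → ℝ := fun i => π / (4 * (i : ℝ))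
  have hα : ∀ i ∈ Set.Icc 1 n, α i ∈ Set.Ioo 0 (π / 2) := fun i hi => pi_div_four_mul_mem_Ioo hi.1
  have hα_anti : StrictAntiOn α (Set.Icc 1 n) :=
    strictAntiOn_pi_div_four_mul.mono Set.Icc_subset_Ici_self
  have hdα : ∀ i, d i = (sin (α i), -cos (α i)) := by
    intro i
    rw [hd, hθ, show 3 * π / 2 + π / (4 * (i : ℝ)) = α i - π / 2 + 2 * π by ring,
      cos_add_two_pi, sin_add_two_pi, cos_sub_pi_div_two, sin_sub_pi_div_two]
  have hnear : ∀ i ∈ Set.Icc 1 n, IsNearIntersection (α i) (c i) := by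
    rintro i ⟨hi, hin⟩
    obtain ⟨hc0, hroot, hmin⟩ := hc i hi hin
    simp only [hdα, neg_smul_mem_circle_iff] at hroot hmin
    exact isNearIntersection_of_forall_le hc0 hroot hmin
  have htimes : ∀ j k l : ℕ, 1 ≤ j → j < k → k < l → l ≤ n → ∃ t' t'' : ℝ, t' ≠ t'' ∧ ∀ t,
      sdet (p k t - p j t) (p l t - p j t) = 0 ↔ t = t' ∨ t = t'' := by
    intro j k l hj hjk hkl hl
    simp only [hp]
    exact exists_two_collinear_times_of_isNearIntersection hα hα_anti hnear hdα ⟨hj, by omega⟩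
      ⟨by omega, by omega⟩ ⟨by omega, hl⟩ hjk hkl
  refine ⟨fun j k l hj hjk hkl hl => ?_, ncard_collinearities_of_forall_exists_two_times n p htimes⟩
  obtain ⟨t', t'', hne, h⟩ := htimes j k l hj hjk hkl hl
  exact ⟨t', t'', hne, (h t').2 (Or.inl rfl), (h t'').2 (Or.inr rfl)⟩
end

section
/- Let k ≥ 3 and let n ≥ k² with k dividing n. There exists a configuration of n points in ℝ², each moving with constant velocity along one of the two vertical lines x = 0 and x = 1, such that the number of distinct k-collinearities (pairs (L, t) with at least k points on line L at time t, not all coincident, not all always collinear) is at least c·n³/k⁴ for an absolute constant c > 0. -/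
/-!
Put `⌊k/2⌋` groups of `m = n/k` points on `x = 0` and the other groups on `x = 1`; in each
group the points start at heights `0, …, m - 1`, and the groups on one line move upward with
speeds `0, 1, 2, …`. Let `T = ⌊m/(2k)⌋`. At an integer time `t ≤ T`, for any heights
`y₀, y₁ ∈ [kT, m)` every group has a point on the line through `(0, y₀)` and `(1, y₁)`, so that
line carries `k` points, which spread apart again at time `t + 1`. This gives
`(T + 1)(m - kT)² ≥ m³/(8k) = n³/(8k⁴)` distinct `k`-collinearities.

Counting them with `Set.ncard` needs finiteness: a `k`-collinearity of points moving on two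
vertical lines always happens at a collision of two points with different velocities, and on a
line through the positions of two points at that time.
-/

open scoped Classical

open Module

section Lines

variable {k V P : Type*} [Field k] [AddCommGroup V] [Module k V] [AddTorsor V P]

theorem finrank_direction_affineSpan_pair {p₁ p₂ : P} (h : p₁ ≠ p₂) :
    finrank k (line[k, p₁, p₂]).direction = 1 := by
  rw [direction_affineSpan, vectorSpan_pair]
  exact finrank_span_singleton (vsub_ne_zero.2 h)

theorem AffineSubspace.eq_affineSpan_pair_of_finrank_direction_eq_one {L : AffineSubspace k P}
    (hL : finrank k L.direction = 1) {p₁ p₂ : P} (h₁ : p₁ ∈ L) (h₂ : p₂ ∈ L) (h : p₁ ≠ p₂) :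
    L = line[k, p₁, p₂] := by
  have hle := affineSpan_pair_le_of_mem_of_mem h₁ h₂
  have : FiniteDimensional k L.direction := Module.finite_of_finrank_eq_succ hL
  refine (AffineSubspace.ext_of_direction_eq ?_ ⟨p₁, left_mem_affineSpan_pair _ _ _, h₁⟩).symm
  exact Submodule.eq_of_le_of_finrank_eq (AffineSubspace.direction_le hle)
    (by rw [finrank_direction_affineSpan_pair h, hL])

end Lines

theorem mem_affineSpan_zero_one_iff {y₀ y₁ : ℝ} {q : ℝ × ℝ} :
    q ∈ line[ℝ, ((0 : ℝ), y₀), ((1 : ℝ), y₁)] ↔ q.2 = y₀ + q.1 * (y₁ - y₀) := by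
  simp only [mem_affineSpan_pair_iff_exists_lineMap_eq, AffineMap.lineMap_apply_module,
    Prod.smul_mk, smul_eq_mul, mul_zero, mul_one, Prod.mk_add_mk, zero_add, Prod.ext_iff]
  constructor
  · rintro ⟨r, rfl, h⟩
    rw [← h]
    ring
  · intro h
    exact ⟨q.1, rfl, by rw [h]; ring⟩

theorem affineSpan_zero_one_injective {y₀ y₁ z₀ z₁ : ℝ}
    (h : line[ℝ, ((0 : ℝ), y₀), ((1 : ℝ), y₁)] = line[ℝ, ((0 : ℝ), z₀), ((1 : ℝ), z₁)]) :
    y₀ = z₀ ∧ y₁ = z₁ := by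
  have h₀ := h ▸ left_mem_affineSpan_pair ℝ ((0 : ℝ), y₀) ((1 : ℝ), y₁)
  have h₁ := h ▸ right_mem_affineSpan_pair ℝ ((0 : ℝ), y₀) ((1 : ℝ), y₁)
  rw [mem_affineSpan_zero_one_iff] at h₀ h₁
  constructor <;> linarith

theorem collinear_of_forall_fst_eq {s : Set (ℝ × ℝ)} {c : ℝ} (h : ∀ q ∈ s, q.1 = c) :
    Collinear ℝ s := by
  rw [collinear_iff_exists_forall_eq_smul_vadd]
  exact ⟨(c, 0), (0, 1), fun q hq => ⟨q.2, by simp [Prod.ext_iff, h q hq]⟩⟩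

theorem not_collinear_of_mem_of_mem_of_mem {s : Set (ℝ × ℝ)} {y z z' : ℝ} (hz : z ≠ z')
    (h₀ : ((0 : ℝ), y) ∈ s) (h₁ : ((1 : ℝ), z) ∈ s) (h₁' : ((1 : ℝ), z') ∈ s) :
    ¬ Collinear ℝ s := by
  intro hs
  obtain ⟨r, hr⟩ := mem_affineSpan_pair_iff_exists_lineMap_eq.1 <|
    hs.mem_affineSpan_of_mem_of_ne h₁ h₁' h₀ (by simpa using hz)
  have := congrArg Prod.fst hr
  simp [AffineMap.lineMap_apply_module] at this

theorem eq_of_mem_affineSpan_zero_one_of_fst_eq {y₀ y₁ : ℝ} {q q' : ℝ × ℝ}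
    (hq : q ∈ line[ℝ, ((0 : ℝ), y₀), ((1 : ℝ), y₁)])
    (hq' : q' ∈ line[ℝ, ((0 : ℝ), y₀), ((1 : ℝ), y₁)]) (h : q.1 = q'.1) : q = q' := by
  rw [mem_affineSpan_zero_one_iff] at hq hq'
  exact Prod.ext h (by rw [hq, hq', h])

theorem add_smul_of_fst_eq_zero {a v : ℝ × ℝ} (hv : v.1 = 0) (s : ℝ) :
    a + s • v = (a.1, a.2 + s * v.2) :=
  Prod.ext (by simp [hv]) (by simp)

def kCollinearities {ι : Type*} [Fintype ι] (k : ℕ) (a v : ι → ℝ × ℝ) :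
    Set (AffineSubspace ℝ (ℝ × ℝ) × ℝ) :=
  {x | finrank ℝ x.1.direction = 1 ∧
    k ≤ (Finset.univ.filter (fun i => a i + x.2 • v i ∈ x.1)).card ∧
    (∃ i j, a i + x.2 • v i ∈ x.1 ∧ a j + x.2 • v j ∈ x.1 ∧
      a i + x.2 • v i ≠ a j + x.2 • v j) ∧
    ¬ ∀ s : ℝ, Collinear ℝ ((fun i => a i + s • v i) '' {i | a i + x.2 • v i ∈ x.1})}

def MovesOnTwoVerticalLines {ι : Type*} (a v : ι → ℝ × ℝ) : Prop :=
  ∀ i, ((a i).1 = 0 ∨ (a i).1 = 1) ∧ (v i).1 = 0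

section Finiteness

variable {ι : Type*} [Fintype ι] {k : ℕ} {a v : ι → ℝ × ℝ} {L : AffineSubspace ℝ (ℝ × ℝ)}
  {t : ℝ}

theorem exists_mem_fst_eq_of_mem_kCollinearities (ha : MovesOnTwoVerticalLines a v)
    (hx : (L, t) ∈ kCollinearities k a v) {c : ℝ} (hc : c = 0 ∨ c = 1) :
    ∃ i, a i + t • v i ∈ L ∧ (a i).1 = c := by
  by_contra! h
  refine hx.2.2.2 fun s => collinear_of_forall_fst_eq (c := 1 - c) ?_
  rintro _ ⟨i, hi, rfl⟩
  have hic := h i hi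
  change (a i + s • v i).1 = 1 - c
  rw [add_smul_of_fst_eq_zero (ha i).2]
  rcases (ha i).1 with h' | h' <;> rcases hc with rfl | rfl <;> simp_all

theorem exists_eq_affineSpan_of_mem_kCollinearities (ha : MovesOnTwoVerticalLines a v)
    (hx : (L, t) ∈ kCollinearities k a v) :
    ∃ i j, L = line[ℝ, ((0 : ℝ), (a i).2 + t * (v i).2), ((1 : ℝ), (a j).2 + t * (v j).2)] := by
  obtain ⟨i, hi, hi₀⟩ := exists_mem_fst_eq_of_mem_kCollinearities ha hx (Or.inl rfl)
  obtain ⟨j, hj, hj₁⟩ := exists_mem_fst_eq_of_mem_kCollinearities ha hx (Or.inr rfl)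
  rw [add_smul_of_fst_eq_zero (ha i).2, hi₀] at hi
  rw [add_smul_of_fst_eq_zero (ha j).2, hj₁] at hj
  exact ⟨i, j, L.eq_affineSpan_pair_of_finrank_direction_eq_one hx.1 hi hj (by simp)⟩

/-- Away from collisions between points of different velocities, the points on a
non-vertical line move rigidly together with one point of each vertical line, so they stay
collinear. -/
theorem exists_collision_of_mem_kCollinearities (ha : MovesOnTwoVerticalLines a v)
    (hx : (L, t) ∈ kCollinearities k a v) :
    ∃ i j, (v i).2 ≠ (v j).2 ∧ a i + t • v i = a j + t • v j := by
  obtain ⟨i₀, hi₀, hi₀0⟩ := exists_mem_fst_eq_of_mem_kCollinearities ha hx (Or.inl rfl)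
  obtain ⟨i₁, hi₁, hi₁1⟩ := exists_mem_fst_eq_of_mem_kCollinearities ha hx (Or.inr rfl)
  obtain ⟨j₀, j₁, hL⟩ := exists_eq_affineSpan_of_mem_kCollinearities ha hx
  by_contra! h
  refine hx.2.2.2 fun s => (collinear_pair ℝ (a i₀ + s • v i₀) (a i₁ + s • v i₁)).subset ?_
  rintro _ ⟨i, hi, rfl⟩
  have hmove : ∀ j, a j + t • v j ∈ L → (a i).1 = (a j).1 → a i + s • v i = a j + s • v j := by
    intro j hj hij
    have hpos : a i + t • v i = a j + t • v j := by
      rw [hL] at hi hj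
      refine eq_of_mem_affineSpan_zero_one_of_fst_eq hi hj ?_
      simp [(ha i).2, (ha j).2, hij]
    have hv : v i = v j :=
      Prod.ext ((ha i).2.trans (ha j).2.symm) (by by_contra hne; exact h i j hne hpos)
    rw [hv] at hpos ⊢
    rw [add_right_cancel hpos]
  rcases (ha i).1 with h' | h'
  · exact Or.inl (hmove i₀ hi₀ (h'.trans hi₀0.symm))
  · exact Or.inr (hmove i₁ hi₁ (h'.trans hi₁1.symm))

theorem kCollinearities_finite (ha : MovesOnTwoVerticalLines a v) :
    (kCollinearities k a v).Finite := by
  let τ : ι → ι → ℝ := fun i j => ((a j).2 - (a i).2) / ((v i).2 - (v j).2)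
  let y : ι → ℝ → ℝ := fun i t => (a i).2 + t * (v i).2
  refine (Set.finite_range fun z : ι × ι × ι × ι =>
    (line[ℝ, ((0 : ℝ), y z.2.2.1 (τ z.1 z.2.1)), ((1 : ℝ), y z.2.2.2 (τ z.1 z.2.1))],
      τ z.1 z.2.1)).subset ?_
  rintro ⟨L, t⟩ hx
  obtain ⟨i, j, hv, hpos⟩ := exists_collision_of_mem_kCollinearities ha hx
  obtain ⟨i', j', rfl⟩ := exists_eq_affineSpan_of_mem_kCollinearities ha hx
  have ht : τ i j = t := by
    have := congrArg Prod.snd hpos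
    simp only [Prod.snd_add, Prod.smul_snd, smul_eq_mul] at this
    rw [div_eq_iff (sub_ne_zero.2 hv)]
    linarith
  exact ⟨(i, j, i', j'), by simp only [ht, y]⟩

end Finiteness

section GroupedConfiguration

variable (p : ℕ)

def groupSide (g : ℕ) : ℝ := if g < p then 0 else 1

def groupSpeed (g : ℕ) : ℕ := if g < p then g else g - p

/-- The height at which a point of group `g` crosses the line through `(0, y₀)` and `(1, y₁)`. -/
def groupHeight (y₀ y₁ g : ℕ) : ℕ := if g < p then y₀ else y₁

variable {k m : ℕ}

/-- The point `r + m * g` of `Fin (k * m)` is the point of group `g` starting at height `r`. -/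
def groupedStart (i : Fin (k * m)) : ℝ × ℝ :=
  (groupSide p (finProdFinEquiv.symm i).1, (finProdFinEquiv.symm i).2)

def groupedVelocity (i : Fin (k * m)) : ℝ × ℝ :=
  (0, groupSpeed p (finProdFinEquiv.symm i).1)

theorem groupedStart_movesOnTwoVerticalLines :
    MovesOnTwoVerticalLines (groupedStart p (k := k) (m := m)) (groupedVelocity p) := by
  intro i
  refine ⟨?_, rfl⟩
  unfold groupedStart groupSide
  split_ifs <;> simp

theorem groupSpeed_le (g : ℕ) : groupSpeed p g ≤ g := by
  unfold groupSpeed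
  split_ifs <;> omega

/-- The point of group `g` that sits on the line through `(0, y₀)` and `(1, y₁)` at time `t`. -/
def collider (t : ℕ) {y₀ y₁ : ℕ} (hy₀ : y₀ < m) (hy₁ : y₁ < m) (g : Fin k) : Fin (k * m) :=
  finProdFinEquiv (g, ⟨groupHeight p y₀ y₁ g - groupSpeed p g * t, by
    unfold groupHeight
    split_ifs <;> omega⟩)

theorem collider_injective (t : ℕ) {y₀ y₁ : ℕ} (hy₀ : y₀ < m) (hy₁ : y₁ < m) :
    Function.Injective (collider p t hy₀ hy₁ (k := k)) := by
  intro g g' h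
  have := congrArg finProdFinEquiv.symm h
  simp only [collider, Equiv.symm_apply_apply, Prod.mk.injEq] at this
  exact this.1

theorem position_collider {t y₀ y₁ : ℕ} (hy₀ : y₀ < m) (hy₁ : y₁ < m) (ht₀ : k * t ≤ y₀)
    (ht₁ : k * t ≤ y₁) (g : Fin k) (s : ℝ) :
    groupedStart p (collider p t hy₀ hy₁ g) + s • groupedVelocity p (collider p t hy₀ hy₁ g) =
      (groupSide p g, groupHeight p y₀ y₁ g + (s - t) * groupSpeed p g) := by
  have hle : groupSpeed p g * t ≤ groupHeight p y₀ y₁ g := by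
    have := Nat.mul_le_mul_right t ((groupSpeed_le p g).trans g.isLt.le)
    unfold groupHeight
    split_ifs <;> omega
  simp only [groupedStart, groupedVelocity, collider, Equiv.symm_apply_apply]
  refine Prod.ext (by simp) ?_
  simp [Nat.cast_sub hle]
  ring

theorem mem_affineSpan_groupSide_groupHeight (y₀ y₁ g : ℕ) :
    (groupSide p g, (groupHeight p y₀ y₁ g : ℝ)) ∈
      line[ℝ, ((0 : ℝ), (y₀ : ℝ)), ((1 : ℝ), (y₁ : ℝ))] := by
  unfold groupSide groupHeight
  split_ifs
  · exact left_mem_affineSpan_pair _ _ _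
  · exact right_mem_affineSpan_pair _ _ _

/-- At time `t + 1` the colliders of the groups `0`, `p` and `p + 1`, of speeds `0`, `0` and `1`,
are no longer collinear. -/
theorem mem_kCollinearities_grouped (hp : 1 ≤ p) (hpk : p + 1 < k) {t y₀ y₁ : ℕ} (hy₀ : y₀ < m)
    (hy₁ : y₁ < m) (ht₀ : k * t ≤ y₀) (ht₁ : k * t ≤ y₁) :
    (line[ℝ, ((0 : ℝ), (y₀ : ℝ)), ((1 : ℝ), (y₁ : ℝ))], (t : ℝ)) ∈
      kCollinearities k (groupedStart p (k := k) (m := m)) (groupedVelocity p) := by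
  set c := collider p t hy₀ hy₁ (k := k)
  have hpos : ∀ g (s : ℝ), groupedStart p (c g) + s • groupedVelocity p (c g) =
      (groupSide p g, groupHeight p y₀ y₁ g + (s - t) * groupSpeed p g) :=
    position_collider p hy₀ hy₁ ht₀ ht₁
  have hmem : ∀ g, groupedStart p (c g) + (t : ℝ) • groupedVelocity p (c g) ∈
      line[ℝ, ((0 : ℝ), (y₀ : ℝ)), ((1 : ℝ), (y₁ : ℝ))] := fun g => by
    rw [hpos, sub_self, zero_mul, add_zero]
    exact mem_affineSpan_groupSide_groupHeight p y₀ y₁ g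
  have h₀ : (0 : ℕ) < p := hp
  refine ⟨finrank_direction_affineSpan_pair (by simp), ?_, ?_, ?_⟩
  · calc k = (Finset.univ : Finset (Fin k)).card := by simp
      _ ≤ _ := Finset.card_le_card_of_injOn c (fun g _ => by simp [hmem g])
        (collider_injective p t hy₀ hy₁).injOn
  · refine ⟨c ⟨0, by omega⟩, c ⟨p, by omega⟩, hmem _, hmem _, ?_⟩
    simp [hpos, groupSide, h₀]
  · intro hcol
    refine not_collinear_of_mem_of_mem_of_mem (y := y₀) (z := y₁) (z' := y₁ + 1) (by simp)
      ?_ ?_ ?_ (hcol (t + 1))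
    · exact ⟨c ⟨0, by omega⟩, hmem _, by simp [hpos, groupSide, groupHeight, groupSpeed, h₀]⟩
    · exact ⟨c ⟨p, by omega⟩, hmem _, by simp [hpos, groupSide, groupHeight, groupSpeed]⟩
    · exact ⟨c ⟨p + 1, hpk⟩, hmem _, by simp [hpos, groupSide, groupHeight, groupSpeed]⟩

theorem card_le_ncard_kCollinearities_grouped (hp : 1 ≤ p) (hpk : p + 1 < k) (T : ℕ) :
    (T + 1) * (m - k * T) ^ 2 ≤
      (kCollinearities k (groupedStart p (k := k) (m := m)) (groupedVelocity p)).ncard := by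
  let S := Finset.range (T + 1) ×ˢ Finset.Ico (k * T) m ×ˢ Finset.Ico (k * T) m
  let φ : ℕ × ℕ × ℕ → AffineSubspace ℝ (ℝ × ℝ) × ℝ := fun w =>
    (line[ℝ, ((0 : ℝ), (w.2.1 : ℝ)), ((1 : ℝ), (w.2.2 : ℝ))], (w.1 : ℝ))
  have hφ : φ.Injective := by
    rintro ⟨t, y₀, y₁⟩ ⟨t', y₀', y₁'⟩ h
    simp only [φ, Prod.mk.injEq] at h
    obtain ⟨hL, ht⟩ := h
    obtain ⟨h₀, h₁⟩ := affineSpan_zero_one_injective hL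
    exact Prod.ext (by exact_mod_cast ht) (Prod.ext (by exact_mod_cast h₀) (by exact_mod_cast h₁))
  have hS : φ '' S ⊆ kCollinearities k (groupedStart p (k := k) (m := m)) (groupedVelocity p) := by
    rintro _ ⟨⟨t, y₀, y₁⟩, hw, rfl⟩
    simp only [S, Finset.coe_product, Set.mem_prod, Finset.coe_range, Set.mem_Iio,
      Finset.coe_Ico, Set.mem_Ico] at hw
    have hkt : k * t ≤ k * T := Nat.mul_le_mul_left k (by omega)
    dsimp only [φ]
    exact mem_kCollinearities_grouped p hp hpk hw.2.1.2 hw.2.2.2 (by omega) (by omega)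
  calc (T + 1) * (m - k * T) ^ 2 = (φ '' S).ncard := by
        rw [Set.ncard_image_of_injective _ hφ, Set.ncard_coe_finset]
        simp [S, sq]
    _ ≤ _ := Set.ncard_le_ncard hS (kCollinearities_finite (groupedStart_movesOnTwoVerticalLines p))

end GroupedConfiguration

theorem cube_le_mul_succ_div_mul_sub_sq {k : ℕ} (hk : 0 < k) (m : ℕ) :
    (m : ℝ) ^ 3 ≤ 8 * k * ((m / (2 * k) + 1) * (m - k * (m / (2 * k))) ^ 2 : ℕ) := by
  set T := m / (2 * k)
  have h₁ : m < 2 * k * (T + 1) := Nat.lt_mul_div_succ m (by omega)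
  have h₂ : 2 * k * T ≤ m := Nat.mul_div_le m (2 * k)
  have h₁' : (m : ℝ) ≤ 2 * k * (T + 1) := by exact_mod_cast h₁.le
  have h₂' : (m : ℝ) ≤ 2 * (m - k * T : ℕ) := by
    rw [Nat.cast_sub (by linarith)]
    push_cast
    linarith [show (2 * k * T : ℝ) ≤ m by exact_mod_cast h₂]
  calc (m : ℝ) ^ 3 = m * m ^ 2 := by ring
    _ ≤ (2 * k * (T + 1)) * (2 * ((m - k * T : ℕ) : ℝ)) ^ 2 := by gcongr
    _ = _ := by push_cast; ring

/-- Lower bound construction: for `k ≥ 3` and `n ≥ k²` with `k ∣ n`, there are `n`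
kinetic points, each moving with constant velocity along one of the vertical lines
`x = 0` and `x = 1`, that determine at least `c·n³/k⁴` distinct `k`-collinearities
(pairs `(L, t)` of a line and a time with at least `k` points on `L` at time `t`, the
points on `L` not all coincident at time `t`, and not all collinear at all times),
for an absolute constant `c > 0`. -/
theorem many_k_collinearities_construction :
    ∃ c : ℝ, 0 < c ∧ ∀ k n : ℕ, 3 ≤ k → k ^ 2 ≤ n → k ∣ n →
      ∃ a v : Fin n → ℝ × ℝ,
        (∀ i : Fin n, ((a i).1 = 0 ∨ (a i).1 = 1) ∧ (v i).1 = 0) ∧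
        c * (n : ℝ) ^ 3 / (k : ℝ) ^ 4 ≤
          ({x : AffineSubspace ℝ (ℝ × ℝ) × ℝ |
              Module.finrank ℝ x.1.direction = 1 ∧
              k ≤ (Finset.univ.filter
                    (fun i => a i + x.2 • v i ∈ x.1)).card ∧
              (∃ i j : Fin n, a i + x.2 • v i ∈ x.1 ∧ a j + x.2 • v j ∈ x.1 ∧
                a i + x.2 • v i ≠ a j + x.2 • v j) ∧
              ¬ (∀ s : ℝ, Collinear ℝ
                  ((fun i => a i + s • v i) '' {i | a i + x.2 • v i ∈ x.1}))}.ncard :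
            ℝ) := by
  refine ⟨1 / 8, by norm_num, fun k n hk _ hkn => ?_⟩
  obtain ⟨m, rfl⟩ := hkn
  have hk₀ : (0 : ℝ) < k := by exact_mod_cast (show 0 < k by omega)
  refine ⟨groupedStart (k / 2), groupedVelocity (k / 2),
    groupedStart_movesOnTwoVerticalLines (k / 2), ?_⟩
  calc (1 / 8 : ℝ) * ((k * m : ℕ) : ℝ) ^ 3 / (k : ℝ) ^ 4 = (m : ℝ) ^ 3 / (8 * k) := by
        push_cast
        field_simp
    _ ≤ (((m / (2 * k) + 1) * (m - k * (m / (2 * k))) ^ 2 : ℕ) : ℝ) := by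
        rw [div_le_iff₀ (by positivity)]
        linarith [cube_le_mul_succ_div_mul_sub_sq (show 0 < k by omega) m]
    _ ≤ _ := by
        exact_mod_cast card_le_ncard_kCollinearities_grouped (k / 2) (by omega) (by omega) _
end

section
/- Let a(t) = a₀ + t•u and b(t) = b₀ + t•v be kinetic points in ℝ² with skew trajectories in ℝ³, and let c(t) = c₀ + t•w be a third kinetic point. If the triple a, b, c is collinear at three distinct times, then it is collinear at all times. -/
/-- If two kinetic points have skew trajectories in `ℝ³` (distinct velocities and no
collision) and a third kinetic point is collinear with them at three distinct times,
then the triple is collinear at all times. -/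
theorem collinear_three_times_implies_always
    (a₀ b₀ c₀ u v w : ℝ × ℝ)
    (hskew : u ≠ v ∧ ∀ t : ℝ, a₀ + t • u ≠ b₀ + t • v)
    (t₁ t₂ t₃ : ℝ) (h12 : t₁ ≠ t₂) (h13 : t₁ ≠ t₃) (h23 : t₂ ≠ t₃)
    (hcol : ∀ t ∈ ({t₁, t₂, t₃} : Set ℝ),
      sdet ((b₀ + t • v) - (a₀ + t • u)) ((c₀ + t • w) - (a₀ + t • u)) = 0) :
    ∀ t : ℝ, sdet ((b₀ + t • v) - (a₀ + t • u)) ((c₀ + t • w) - (a₀ + t • u)) = 0 := by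
  intro t
  have h1 := hcol t₁ (by simp)
  have h2 := hcol t₂ (by simp)
  have h3 := hcol t₃ (by simp)
  simp only [sdet, Prod.fst_add, Prod.snd_add, Prod.fst_sub, Prod.snd_sub,
    Prod.smul_fst, Prod.smul_snd, smul_eq_mul] at h1 h2 h3 ⊢
  have key : ((t₁ - t₂) * (t₁ - t₃) * (t₂ - t₃)) *
      ((b₀ + t • v - (a₀ + t • u)).1 * (c₀ + t • w - (a₀ + t • u)).2 -
        (b₀ + t • v - (a₀ + t • u)).2 * (c₀ + t • w - (a₀ + t • u)).1) = 0 := by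
    simp only [Prod.fst_add, Prod.snd_add, Prod.fst_sub, Prod.snd_sub,
      Prod.smul_fst, Prod.smul_snd, smul_eq_mul]
    linear_combination ((t - t₂) * (t - t₃) * (t₂ - t₃)) * h1 -
      ((t - t₁) * (t - t₃) * (t₁ - t₃)) * h2 +
      ((t - t₁) * (t - t₂) * (t₁ - t₂)) * h3
  have hD : (t₁ - t₂) * (t₁ - t₃) * (t₂ - t₃) ≠ 0 := by
    refine mul_ne_zero (mul_ne_zero ?_ ?_) ?_ <;> exact sub_ne_zero.mpr ‹_›
  have := (mul_eq_zero.mp key).resolve_left hD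
  simpa [Prod.fst_add, Prod.snd_add, Prod.fst_sub, Prod.snd_sub,
    Prod.smul_fst, Prod.smul_snd, smul_eq_mul] using this
end

section
/- There exists a family of n kinetic points in ℝ² (n ≥ 3 arbitrary), each moving with constant velocity, all with pairwise distinct directions of motion and all with speed 1, such that for every t ∈ ℝ the n points lie on a common circle of positive radius (depending on t); consequently no three of the points are ever collinear. Concretely: pᵢ(t) = (cos θᵢ − t·sin θᵢ, sin θᵢ + t·cos θᵢ) with θᵢ = π/2 + π/(2i) for 1 ≤ i ≤ n satisfies |pᵢ(t)|² = 1 + t² for all i and t, and the n points are pairwise distinct at every time t. -/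
open Real

lemma aux_sin_id (a b : ℝ) :
    sin (2*a) + sin (2*b) - sin (2*a + 2*b) = 4 * sin a * sin b * sin (a+b) := by
  rw [show 2*a+2*b = 2*(a+b) by ring, sin_two_mul, sin_two_mul, sin_two_mul,
    sin_add, cos_add]
  linear_combination (-2*sin a*cos a) * (sin_sq_add_cos_sq b) + (-2*sin b*cos b) * (sin_sq_add_cos_sq a)

lemma aux_theta_bounds (i : ℕ) (hi : 1 ≤ i) :
    0 < π / (2 * (i:ℝ)) ∧ π / (2 * (i:ℝ)) ≤ π / 2 := by
  have hi' : (1:ℝ) ≤ (i:ℝ) := by exact_mod_cast hi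
  constructor
  · positivity
  · apply div_le_div_of_nonneg_left pi_pos.le (by norm_num) (by linarith)

/-- A family of `n ≥ 3` kinetic points, all of speed 1 with pairwise distinct
directions of motion, lying for every `t` on a common circle of radius `√(1 + t²)`
(so no three are ever collinear): `pᵢ(t) = (cos θᵢ − t sin θᵢ, sin θᵢ + t cos θᵢ)`
with `θᵢ = π/2 + π/(2i)`. -/
theorem unit_speed_points_on_circle_never_three_collinear
    (n : ℕ) (hn : 3 ≤ n)
    (θ : ℕ → ℝ) (hθ : ∀ i : ℕ, θ i = π / 2 + π / (2 * (i : ℝ)))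
    (p : ℕ → ℝ → ℝ × ℝ)
    (hp : ∀ (i : ℕ) (t : ℝ),
      p i t = (cos (θ i) - t * sin (θ i), sin (θ i) + t * cos (θ i))) :
    (∀ (i : ℕ) (t : ℝ), 1 ≤ i → i ≤ n →
      (p i t).1 ^ 2 + (p i t).2 ^ 2 = 1 + t ^ 2) ∧
    (∀ (i j : ℕ) (t : ℝ), 1 ≤ i → i < j → j ≤ n → p i t ≠ p j t) ∧
    (∀ i j : ℕ, 1 ≤ i → i < j → j ≤ n →
      ((-sin (θ i), cos (θ i)) : ℝ × ℝ) ≠ (-sin (θ j), cos (θ j))) ∧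
    (∀ (t : ℝ) (i j k : ℕ), 1 ≤ i → i < j → j < k → k ≤ n →
      sdet (p j t - p i t) (p k t - p i t) ≠ 0) := by
  have hpi := pi_pos
  -- monotonicity and gap bounds for θ
  have hmono : ∀ i j : ℕ, 1 ≤ i → i < j → θ j < θ i ∧ θ i - θ j < π / 2 := by
    intro i j hi hij
    have hij' : ((i:ℝ)) < (j:ℝ) := by exact_mod_cast hij
    obtain ⟨h1, h2⟩ := aux_theta_bounds i hi
    obtain ⟨h3, h4⟩ := aux_theta_bounds j (hi.trans hij.le)
    have hlt : π / (2*(j:ℝ)) < π / (2*(i:ℝ)) := by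
      apply div_lt_div_of_pos_left pi_pos (by positivity) (by linarith)
    rw [hθ i, hθ j]
    constructor <;> linarith
  have hrange : ∀ i : ℕ, 1 ≤ i → θ i ∈ Set.Icc 0 π := by
    intro i hi
    obtain ⟨h1, h2⟩ := aux_theta_bounds i hi
    rw [hθ i]
    constructor <;> linarith
  have hcos : ∀ i j : ℕ, 1 ≤ i → i < j → j ≤ n → cos (θ i) ≠ cos (θ j) := by
    intro i j hi hij hj h
    have := injOn_cos (hrange i hi) (hrange j (hi.trans hij.le)) h
    have := (hmono i j hi hij).1
    linarith
  refine ⟨?_, ?_, ?_, ?_⟩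
  · intro i t _ _
    rw [hp]
    simp only
    linear_combination (1 + t^2) * sin_sq_add_cos_sq (θ i)
  · intro i j t hi hij hj h
    rw [hp, hp, Prod.mk.injEq] at h
    obtain ⟨e1, e2⟩ := h
    apply hcos i j hi hij hj
    have h3 : (1 + t^2) * (cos (θ i) - cos (θ j)) = 0 := by linear_combination e1 + t * e2
    have h4 : (1 : ℝ) + t^2 ≠ 0 := by positivity
    have := (mul_eq_zero.mp h3).resolve_left h4
    linarith
  · intro i j hi hij hj h
    rw [Prod.mk.injEq] at h
    exact hcos i j hi hij hj h.2
  · intro t i j k hi hij hjk hk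
    have key : sdet (p j t - p i t) (p k t - p i t)
        = (1 + t^2) * (sin (θ j - θ i) + sin (θ k - θ j) - sin (θ k - θ i)) := by
      rw [hp, hp, hp]
      simp only [sdet, Prod.mk_sub_mk]
      rw [sin_sub, sin_sub, sin_sub]
      ring
    rw [key]
    apply mul_ne_zero (by positivity)
    set a := (θ j - θ i) / 2 with ha
    set b := (θ k - θ j) / 2 with hb
    have hji := hmono i j hi hij
    have hkj := hmono j k (hi.trans hij.le) hjk
    have ha1 : -π / 2 < a := by rw [ha]; linarith [hji.2]
    have ha2 : a < 0 := by rw [ha]; linarith [hji.1]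
    have hb1 : -π / 2 < b := by rw [hb]; linarith [hkj.2]
    have hb2 : b < 0 := by rw [hb]; linarith [hkj.1]
    have s1 : sin a < 0 := sin_neg_of_neg_of_neg_pi_lt ha2 (by linarith)
    have s2 : sin b < 0 := sin_neg_of_neg_of_neg_pi_lt hb2 (by linarith)
    have s3 : sin (a + b) < 0 := sin_neg_of_neg_of_neg_pi_lt (by linarith) (by linarith)
    have hrw : sin (θ j - θ i) + sin (θ k - θ j) - sin (θ k - θ i)
        = 4 * sin a * sin b * sin (a + b) := by
      have := aux_sin_id a b
      rw [ha, hb] at this ⊢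
      convert this using 3 <;> ring
    rw [hrw]
    have hpos : 0 < sin a * sin b := mul_pos_of_neg_of_neg s1 s2
    nlinarith
end
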